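/- arXiv:1707.06533 — 2 statements merged into one kernel-verified Lean document; each statement's English description precedes it below -/
import Mathlib

section
/- For any two distinct vertices (v_i, u_j) and (v_r, u_s) of the co-normal product G ⋆ H, their open neighborhoods are equal if and only if one of the following holds: (i) v_i = v_r in G and N(u_j) = N(u_s) in H; (ii) u_j = u_s in H and N(v_i) = N(v_r) in G; or (iii) N(v_i) = N(v_r) in G and N(u_j) = N(u_s) in H. -/
open SimpleGraph

/-- The co-normal product of two simple graphs. -/
def conormalProd {α β : Type*} (G : SimpleGraph α) (H : SimpleGraph β) :
    SimpleGraph (α × β) where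
  Adj x y := G.Adj x.1 y.1 ∨ H.Adj x.2 y.2
  symm := ⟨fun x y h => h.imp (fun a => a.symm) (fun a => a.symm)⟩
  loopless := ⟨fun x h => h.elim (G.loopless.irrefl x.1) (H.loopless.irrefl x.2)⟩

/-- The distinguishing number of a graph. -/
noncomputable def distinguishingNumber {α : Type*} (G : SimpleGraph α) : ℕ :=
  sInf {d | ∃ c : α → Fin d,
    ∀ φ : G ≃g G, (∀ v, c (φ v) = c v) → φ = SimpleGraph.Iso.refl}

/-- The distinguishing index of a graph. -/
noncomputable def distinguishingIndex {α : Type*} (G : SimpleGraph α) : ℕ :=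
  sInf {d | ∃ c : G.edgeSet → Fin d,
    ∀ φ : G ≃g G, (∀ e, c (φ.mapEdgeSet e) = c e) → φ = SimpleGraph.Iso.refl}

/-- A dominating vertex: adjacent to all other vertices. -/
def IsDominatingVertex {α : Type*} (G : SimpleGraph α) (v : α) : Prop :=
  ∀ w, w ≠ v → G.Adj v w

/-- Two vertices are false twins if they are distinct and have equal open neighborhoods. -/
def FalseTwins {α : Type*} (G : SimpleGraph α) (u v : α) : Prop :=
  u ≠ v ∧ G.neighborSet u = G.neighborSet v

/-- A graph is rigid if its only automorphism is the identity. -/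
def GraphRigid {α : Type*} (G : SimpleGraph α) : Prop :=
  ∀ φ : G ≃g G, φ = SimpleGraph.Iso.refl

section ConormalProd

variable {α β : Type*} {G : SimpleGraph α} {H : SimpleGraph β}

@[simp]
theorem conormalProd_adj {x y : α × β} :
    (conormalProd G H).Adj x y ↔ G.Adj x.1 y.1 ∨ H.Adj x.2 y.2 :=
  Iff.rfl

/-- Since `x` is not its own neighbour, neither factor of `y` is adjacent to the matching factor
of `x`; testing against the vertices `(c, x.2)` and `(x.1, c)` then isolates each factor. -/
theorem conormalProd_neighborSet_eq_iff {x y : α × β} :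
    (conormalProd G H).neighborSet x = (conormalProd G H).neighborSet y ↔
      G.neighborSet x.1 = G.neighborSet y.1 ∧ H.neighborSet x.2 = H.neighborSet y.2 := by
  constructor
  · intro h
    have hadj : ∀ z, (conormalProd G H).Adj x z ↔ (conormalProd G H).Adj y z := Set.ext_iff.mp h
    have hnot : ¬ G.Adj y.1 x.1 ∧ ¬ H.Adj y.2 x.2 := not_or.mp fun hyx =>
      (conormalProd G H).loopless.irrefl x ((hadj x).mpr hyx)
    constructor <;> ext c <;> simp only [mem_neighborSet]
    · simpa [hnot.2] using hadj (c, x.2)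
    · simpa [hnot.1] using hadj (x.1, c)
  · rintro ⟨hG, hH⟩
    ext z
    exact or_congr (Set.ext_iff.mp hG z.1) (Set.ext_iff.mp hH z.2)

end ConormalProd

theorem stmt2_general {α β : Type*} (G : SimpleGraph α) (H : SimpleGraph β)
    (v r : α) (u s : β) :
    (conormalProd G H).neighborSet (v, u) = (conormalProd G H).neighborSet (r, s) ↔
      (v = r ∧ H.neighborSet u = H.neighborSet s) ∨
      (u = s ∧ G.neighborSet v = G.neighborSet r) ∨
      (G.neighborSet v = G.neighborSet r ∧ H.neighborSet u = H.neighborSet s) := by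
  rw [conormalProd_neighborSet_eq_iff]
  constructor
  · exact fun h => Or.inr (Or.inr h)
  · rintro (⟨rfl, hH⟩ | ⟨rfl, hG⟩ | h)
    exacts [⟨rfl, hH⟩, ⟨hG, rfl⟩, h]

theorem stmt2 {α β : Type*} (G : SimpleGraph α) (H : SimpleGraph β)
    (v r : α) (u s : β) (hne : (v, u) ≠ (r, s)) :
    (conormalProd G H).neighborSet (v, u) = (conormalProd G H).neighborSet (r, s) ↔
      (v = r ∧ H.neighborSet u = H.neighborSet s) ∨
      (u = s ∧ G.neighborSet v = G.neighborSet r) ∨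
      (G.neighborSet v = G.neighborSet r ∧ H.neighborSet u = H.neighborSet s) :=
  stmt2_general G H v r u s
end

section
/- Let G be a connected graph of order n ≥ 2 and m ≥ 2. Then the distinguishing index of G ⋆ K_m equals 2, except that D'(K₂ ⋆ K₂) = 3. -/
open SimpleGraph

/-!
Permuting the layers of `G ⋆ K_m` is a nontrivial automorphism, so one label never suffices.
For `nm ≥ 6`, fix an edge `x₀x₁` of `G` and enumerate the vertices by `(x, i) ↦ i + m·a(x)`
with `a(x₀) = 0`, `a(x₁) = 1`. Consecutive vertices lie in different layers and the first
`2m ≥ 4` vertices form a clique, so `G ⋆ K_m` contains a spanning copy of an asymmetric graph: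
the path `1 – 2 – ⋯ – (nm-1)` with a vertex `0` joined to `2` and `3`. Labelling the edges of
this copy `1` and all other edges `0` is distinguishing. For `n = m = 2` the product is `K₄`;
there every `2`-labelling is fixed by a nontrivial permutation (no graph on four vertices is
asymmetric), while a suitable `3`-labelling is not.
-/

section

variable {V W V' W' : Type*}

def IsDistinguishingEdgeLabeling (H : SimpleGraph V) {d : ℕ} (c : H.edgeSet → Fin d) : Prop :=
  ∀ φ : H ≃g H, (∀ e, c (φ.mapEdgeSet e) = c e) → φ = Iso.refl

theorem IsDistinguishingEdgeLabeling.castLE {H : SimpleGraph V} {d d' : ℕ}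
    {c : H.edgeSet → Fin d} (hc : IsDistinguishingEdgeLabeling H c) (h : d ≤ d') :
    IsDistinguishingEdgeLabeling H (Fin.castLE h ∘ c) :=
  fun φ hφ => hc φ fun e => Fin.castLE_injective h (hφ e)

theorem distinguishingIndex_eq_succ {H : SimpleGraph V} {k : ℕ}
    (hk : ∃ c : H.edgeSet → Fin (k + 1), IsDistinguishingEdgeLabeling H c)
    (hlt : ∀ c : H.edgeSet → Fin k, ¬ IsDistinguishingEdgeLabeling H c) :
    distinguishingIndex H = k + 1 := by
  refine le_antisymm (Nat.sInf_le hk) (le_csInf ⟨_, hk⟩ ?_)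
  rintro d ⟨c, hc⟩
  by_contra! hd
  exact hlt _ (IsDistinguishingEdgeLabeling.castLE hc (Nat.le_of_lt_succ hd))

theorem not_isDistinguishingEdgeLabeling_of_ne_refl {H : SimpleGraph V} {φ : H ≃g H}
    (hφ : φ ≠ Iso.refl) (c : H.edgeSet → Fin 1) : ¬ IsDistinguishingEdgeLabeling H c :=
  fun hc => hφ (hc φ fun _ => Subsingleton.elim _ _)

theorem SimpleGraph.Iso.mapEdgeSet_trans {G : SimpleGraph V} {G' : SimpleGraph W}
    {G'' : SimpleGraph V'} (φ : G ≃g G') (ψ : G' ≃g G'') (e : G.edgeSet) :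
    Iso.mapEdgeSet (φ.trans ψ) e = ψ.mapEdgeSet (φ.mapEdgeSet e) :=
  Subtype.ext (Sym2.map_map (f := φ) (g := ψ) e.1).symm

theorem IsDistinguishingEdgeLabeling.comp_iso {H : SimpleGraph V} {H' : SimpleGraph W} {d : ℕ}
    {c : H.edgeSet → Fin d} (hc : IsDistinguishingEdgeLabeling H c) (e : H ≃g H') :
    IsDistinguishingEdgeLabeling H' (c ∘ e.symm.mapEdgeSet) := by
  intro ψ hψ
  have hrefl : (e.trans ψ).trans e.symm = Iso.refl := hc _ fun x => by
    rw [Iso.mapEdgeSet_trans, Iso.mapEdgeSet_trans]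
    exact (hψ (e.mapEdgeSet x)).trans (congrArg c (e.mapEdgeSet.symm_apply_apply x))
  ext w
  simpa using congr(e ($hrefl (e.symm w)))

theorem distinguishingIndex_congr {H : SimpleGraph V} {H' : SimpleGraph W} (e : H ≃g H') :
    distinguishingIndex H = distinguishingIndex H' :=
  congrArg sInf <| Set.ext fun _ =>
    ⟨fun ⟨_, hc⟩ => ⟨_, IsDistinguishingEdgeLabeling.comp_iso hc e⟩,
      fun ⟨_, hc⟩ => ⟨_, IsDistinguishingEdgeLabeling.comp_iso hc e.symm⟩⟩

theorem GraphRigid.of_iso {G : SimpleGraph V} {G' : SimpleGraph W} (h : GraphRigid G')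
    (e : G ≃g G') : GraphRigid G := by
  intro φ
  have hrefl := h ((e.symm.trans φ).trans e)
  ext v
  simpa using congr(e.symm ($hrefl (e v)))

theorem GraphRigid.exists_isDistinguishingEdgeLabeling_fin_two {T H : SimpleGraph V}
    (hT : GraphRigid T) (hle : T ≤ H) :
    ∃ c : H.edgeSet → Fin 2, IsDistinguishingEdgeLabeling H c := by
  classical
  refine ⟨fun e => if (e : Sym2 V) ∈ T.edgeSet then 1 else 0, fun φ hφ => ?_⟩
  have hT_iff {u v : V} (huv : H.Adj u v) : T.Adj (φ u) (φ v) ↔ T.Adj u v := by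
    have := hφ ⟨s(u, v), huv⟩
    by_cases h₁ : T.Adj (φ u) (φ v) <;> by_cases h₂ : T.Adj u v <;> simp_all [Iso.mapEdgeSet]
  let ψ : T ≃g T := ⟨φ.toEquiv, fun {u v} =>
    ⟨fun h => (hT_iff (φ.map_adj_iff.1 (hle h))).1 h, fun h => (hT_iff (hle h)).2 h⟩⟩
  ext v
  exact congr($(hT ψ) v)

def SimpleGraph.Iso.conormalProdCongr {G : SimpleGraph V} {G' : SimpleGraph V'}
    {H : SimpleGraph W} {H' : SimpleGraph W'} (φ : G ≃g G') (ψ : H ≃g H') :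
    conormalProd G H ≃g conormalProd G' H' where
  toEquiv := φ.toEquiv.prodCongr ψ.toEquiv
  map_rel_iff' := or_congr φ.map_adj_iff ψ.map_adj_iff

@[simp]
theorem SimpleGraph.Iso.conormalProdCongr_apply {G : SimpleGraph V} {G' : SimpleGraph V'}
    {H : SimpleGraph W} {H' : SimpleGraph W'} (φ : G ≃g G') (ψ : H ≃g H') (u : V × W) :
    Iso.conormalProdCongr φ ψ u = (φ u.1, ψ u.2) := rfl

theorem SimpleGraph.Iso.conormalProdCongr_refl_ne_refl [Nonempty V] {G : SimpleGraph V}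
    {H : SimpleGraph W} {ψ : H ≃g H} (hψ : ψ ≠ Iso.refl) :
    Iso.conormalProdCongr (Iso.refl : G ≃g G) ψ ≠ Iso.refl := by
  obtain ⟨x⟩ := ‹Nonempty V›
  intro h
  refine hψ (RelIso.ext fun w => ?_)
  simpa using congr(Prod.snd ($h (x, w)))

theorem exists_iso_top_ne_refl [Nontrivial W] :
    ∃ ψ : (⊤ : SimpleGraph W) ≃g ⊤, ψ ≠ Iso.refl := by
  classical
  obtain ⟨x, y, hxy⟩ := exists_pair_ne W
  refine ⟨Iso.completeGraph (Equiv.swap x y), fun h => hxy ?_⟩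
  simpa using (congr($h x) : Equiv.swap x y x = x).symm

theorem conormalProd_top_top : conormalProd (⊤ : SimpleGraph V) (⊤ : SimpleGraph W) = ⊤ := by
  ext u v
  simp only [conormalProd, top_adj, ne_eq, Prod.ext_iff]
  tauto

theorem conormalProd_top_adj_of_fst_mem {G : SimpleGraph V} {x₀ x₁ : V} (hadj : G.Adj x₀ x₁)
    {u v : V × W} (hu : u.1 = x₀ ∨ u.1 = x₁) (hv : v.1 = x₀ ∨ v.1 = x₁) (huv : u ≠ v) :
    (conormalProd G (⊤ : SimpleGraph W)).Adj u v := by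
  by_cases h₂ : u.2 = v.2
  · have h₁ : u.1 ≠ v.1 := fun h₁ => huv (Prod.ext h₁ h₂)
    left
    rcases hu with hu | hu <;> rcases hv with hv | hv <;> simp_all [G.adj_comm]
  · exact Or.inr h₂

theorem SimpleGraph.Connected.eq_top_of_card_eq_two [Fintype V] {G : SimpleGraph V}
    (hG : G.Connected) (h : Fintype.card V = 2) : G = ⊤ := by
  have : Nontrivial V := Fintype.one_lt_card_iff_nontrivial.mp (by omega)
  ext x y
  refine ⟨G.ne_of_adj, fun hxy => ?_⟩
  obtain ⟨z, hz⟩ := hG.preconnected.exists_adj_of_nontrivial x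
  obtain rfl : z = y := by
    by_contra hzy
    have := Fintype.two_lt_card_iff.mpr ⟨x, y, z, hxy, G.ne_of_adj hz, Ne.symm hzy⟩
    omega
  exact hz

section CompleteGraph

variable [DecidableEq V] {k : ℕ} [NeZero k]

def pairLabel (c : (⊤ : SimpleGraph V).edgeSet → Fin k) (i j : V) : Fin k :=
  if h : i = j then 0 else c ⟨s(i, j), h⟩

@[simp]
theorem pairLabel_self (c : (⊤ : SimpleGraph V).edgeSet → Fin k) (i : V) :
    pairLabel c i i = 0 :=
  dif_pos rfl

theorem pairLabel_of_ne (c : (⊤ : SimpleGraph V).edgeSet → Fin k) {i j : V} (h : i ≠ j) :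
    pairLabel c i j = c ⟨s(i, j), h⟩ :=
  dif_neg h

theorem pairLabel_comm (c : (⊤ : SimpleGraph V).edgeSet → Fin k) (i j : V) :
    pairLabel c i j = pairLabel c j i := by
  by_cases h : i = j
  · rw [h]
  · rw [pairLabel_of_ne c h, pairLabel_of_ne c (Ne.symm h)]
    exact congrArg c (Subtype.ext Sym2.eq_swap)

theorem SimpleGraph.Iso.forall_mapEdgeSet_eq_iff_pairLabel
    (c : (⊤ : SimpleGraph V).edgeSet → Fin k) (φ : (⊤ : SimpleGraph V) ≃g ⊤) :
    (∀ e, c (φ.mapEdgeSet e) = c e) ↔ ∀ i j, pairLabel c (φ i) (φ j) = pairLabel c i j := by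
  constructor
  · intro h i j
    by_cases hij : i = j
    · simp [hij]
    · rw [pairLabel_of_ne c hij, pairLabel_of_ne c (φ.injective.ne hij)]
      exact h ⟨s(i, j), hij⟩
  · rintro h ⟨e, he⟩
    induction e using Sym2.ind with
    | h i j =>
      have := h i j
      rwa [pairLabel_of_ne c he, pairLabel_of_ne c (φ.injective.ne he)] at this

def labelMatrix (a b c d e f : Fin k) : Fin 4 → Fin 4 → Fin k :=
  ![![0, a, b, c], ![a, 0, d, e], ![b, d, 0, f], ![c, e, f, 0]]

end CompleteGraph

theorem exists_perm_ne_one_labelMatrix_fin_two : ∀ a b c d e f : Fin 2,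
    ∃ σ : Equiv.Perm (Fin 4), σ ≠ 1 ∧
      ∀ i j, labelMatrix a b c d e f (σ i) (σ j) = labelMatrix a b c d e f i j := by
  decide +kernel

-- The only edge labelled `1` is `01` and the edges labelled `2` form the path `0 – 2 – 3`.
theorem perm_eq_one_of_labelMatrix : ∀ σ : Equiv.Perm (Fin 4),
    (∀ i j, labelMatrix (1 : Fin 3) 2 0 0 0 2 (σ i) (σ j) =
      labelMatrix (1 : Fin 3) 2 0 0 0 2 i j) → σ = 1 := by
  decide

theorem distinguishingIndex_top_fin_four :
    distinguishingIndex (⊤ : SimpleGraph (Fin 4)) = 3 := by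
  refine distinguishingIndex_eq_succ (k := 2) ?_ fun c hc => ?_
  · let L := labelMatrix (1 : Fin 3) 2 0 0 0 2
    have hL : ∀ i j, L i j = L j i := by decide
    let c : (⊤ : SimpleGraph (Fin 4)).edgeSet → Fin 3 := fun e => Sym2.lift ⟨L, hL⟩ e.1
    have hpair : pairLabel c = L := by
      ext i j : 2
      by_cases hij : i = j
      · subst hij; fin_cases i <;> rfl
      · rw [pairLabel_of_ne c hij]; rfl
    refine ⟨c, fun φ hφ => ?_⟩
    rw [Iso.forall_mapEdgeSet_eq_iff_pairLabel, hpair] at hφ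
    exact RelIso.ext fun i => congr($(perm_eq_one_of_labelMatrix φ.toEquiv hφ) i)
  · have hpair : pairLabel c = labelMatrix (pairLabel c 0 1) (pairLabel c 0 2)
        (pairLabel c 0 3) (pairLabel c 1 2) (pairLabel c 1 3) (pairLabel c 2 3) := by
      ext i j : 2
      fin_cases i <;> fin_cases j <;>
        first | rfl | exact pairLabel_self c _ | exact pairLabel_comm c _ _
    obtain ⟨σ, hσ, hpres⟩ := exists_perm_ne_one_labelMatrix_fin_two (pairLabel c 0 1)
      (pairLabel c 0 2) (pairLabel c 0 3) (pairLabel c 1 2) (pairLabel c 1 3) (pairLabel c 2 3)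
    refine hσ (Equiv.ext fun i => congr($(hc (Iso.completeGraph σ) ?_) i))
    rw [Iso.forall_mapEdgeSet_eq_iff_pairLabel, hpair]
    exact hpres

theorem Fin.apply_eq_self_of_injective {N : ℕ} {f : Fin N → Fin N} (hf : Function.Injective f)
    (h : ∀ k, (∀ j < k, f j = j) → f k ≤ k) (k : Fin N) : f k = k := by
  induction k using WellFoundedLT.induction with
  | _ k ih => exact (h k ih).eq_of_not_lt fun hlt => hlt.ne (hf (ih _ hlt))

section TailedPath

variable {N : ℕ}

def tailedPath (N : ℕ) : SimpleGraph (Fin N) where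
  Adj i j := (1 ≤ i.val ∧ 1 ≤ j.val ∧ (i.val + 1 = j.val ∨ j.val + 1 = i.val)) ∨
    (i.val = 0 ∧ (j.val = 2 ∨ j.val = 3)) ∨ (j.val = 0 ∧ (i.val = 2 ∨ i.val = 3))
  symm := ⟨fun _ _ h => by omega⟩
  loopless := ⟨fun _ h => by omega⟩

theorem tailedPath_adj {i j : Fin N} : (tailedPath N).Adj i j ↔
    (1 ≤ i.val ∧ 1 ≤ j.val ∧ (i.val + 1 = j.val ∨ j.val + 1 = i.val)) ∨
    (i.val = 0 ∧ (j.val = 2 ∨ j.val = 3)) ∨ (j.val = 0 ∧ (i.val = 2 ∨ i.val = 3)) :=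
  Iff.rfl

theorem tailedPath_val_of_triangle {i a b : Fin N} (ha : (tailedPath N).Adj i a)
    (hb : (tailedPath N).Adj i b) (hab : (tailedPath N).Adj a b) :
    (i : ℕ) = 0 ∨ (i : ℕ) = 2 ∨ (i : ℕ) = 3 := by
  rw [tailedPath_adj] at ha hb hab
  omega

theorem tailedPath_val_le_of_adj {i j : Fin N} (h : (tailedPath N).Adj i j)
    (hi : 3 ≤ (i : ℕ)) : (j : ℕ) ≤ i + 1 := by
  rw [tailedPath_adj] at h
  omega

-- `φ` permutes the triangle `{0, 2, 3}` and maps `1, 4` off it, so neither `2` nor `3` goes to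
-- `0`; swapping `2` and `3` would force `1 ↦ 4`, `4 ↦ 1` and then `5 ↦ 2`.
theorem tailedPath_iso_apply_eq_self_of_lt_four (hN : 6 ≤ N)
    (φ : tailedPath N ≃g tailedPath N) {k : Fin N} (hk : (k : ℕ) < 4) : φ k = k := by
  let v : Fin 6 → Fin N := Fin.castLE hN
  have hadj (i j : Fin 6) (h : (tailedPath N).Adj (v i) (v j)) :
      (tailedPath N).Adj (φ (v i)) (φ (v j)) :=
    φ.map_adj_iff.2 h
  have hne (i j : Fin 6) (h : i ≠ j) : (φ (v i) : ℕ) ≠ φ (v j) :=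
    Fin.val_ne_of_ne (φ.injective.ne ((Fin.castLE_injective hN).ne h))
  have htriangle (i a b : Fin 6) (h : (tailedPath N).Adj (v i) (v a) ∧
      (tailedPath N).Adj (v i) (v b) ∧ (tailedPath N).Adj (v a) (v b)) :
      (φ (v i) : ℕ) = 0 ∨ (φ (v i) : ℕ) = 2 ∨ (φ (v i) : ℕ) = 3 :=
    tailedPath_val_of_triangle (hadj i a h.1) (hadj i b h.2.1) (hadj a b h.2.2)
  have h₀ := htriangle 0 2 3 (by simp [tailedPath_adj, v])
  have h₂ := htriangle 2 0 3 (by simp [tailedPath_adj, v])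
  have h₃ := htriangle 3 0 2 (by simp [tailedPath_adj, v])
  have h₁₂ := tailedPath_adj.1 (hadj 1 2 (by simp [tailedPath_adj, v]))
  have h₃₄ := tailedPath_adj.1 (hadj 3 4 (by simp [tailedPath_adj, v]))
  have h₄₅ := tailedPath_adj.1 (hadj 4 5 (by simp [tailedPath_adj, v]))
  have := hne 0 2 (by decide); have := hne 0 3 (by decide); have := hne 2 3 (by decide)
  have h₁ : (φ (v 1) : ℕ) ≠ 0 ∧ (φ (v 1) : ℕ) ≠ 2 ∧ (φ (v 1) : ℕ) ≠ 3 := by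
    have := hne 1 0 (by decide); have := hne 1 2 (by decide); have := hne 1 3 (by decide)
    omega
  have h₄ : (φ (v 4) : ℕ) ≠ 0 ∧ (φ (v 4) : ℕ) ≠ 2 ∧ (φ (v 4) : ℕ) ≠ 3 := by
    have := hne 4 0 (by decide); have := hne 4 2 (by decide); have := hne 4 3 (by decide)
    omega
  have hs₀ : (φ (v 0) : ℕ) = 0 := by omega
  have hs₂ : (φ (v 2) : ℕ) = 2 := by have := hne 5 3 (by decide); omega
  have hs₁ : (φ (v 1) : ℕ) = 1 := by omega
  have hs₃ : (φ (v 3) : ℕ) = 3 := by omega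
  obtain ⟨k, hkN⟩ := k
  apply Fin.ext
  simp only at hk ⊢
  interval_cases k
  exacts [hs₀, hs₁, hs₂, hs₃]

theorem graphRigid_tailedPath (hN : 6 ≤ N) : GraphRigid (tailedPath N) := fun φ =>
  RelIso.ext <| Fin.apply_eq_self_of_injective φ.injective fun k hk => by
    rcases lt_or_ge (k : ℕ) 4 with h4 | h4
    · exact (tailedPath_iso_apply_eq_self_of_lt_four hN φ h4).le
    · let p : Fin N := ⟨k - 1, by omega⟩
      have hp : (tailedPath N).Adj p (φ k) := by
        have := φ.map_adj_iff.2 (show (tailedPath N).Adj p k by simp [tailedPath_adj, p]; omega)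
        rwa [hk p (Fin.lt_def.2 (by simp [p]; omega))] at this
      have := tailedPath_val_le_of_adj hp (by simp [p]; omega)
      simp only [p] at this
      exact Fin.le_def.2 (by omega)

end TailedPath

section Enumeration

variable [Fintype V] {m : ℕ}

theorem Nat.mul_add_one_ne_mul {x y : ℕ} (hm : 2 ≤ m) : m * x + 1 ≠ m * y := by
  intro h
  have := congrArg (· % m) h
  simp [Nat.add_mod, Nat.mod_eq_of_lt (show 1 < m by omega)] at this

theorem exists_equiv_fin_val_eq_zero_val_eq_one {x₀ x₁ : V} (h : x₀ ≠ x₁) :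
    ∃ a : V ≃ Fin (Fintype.card V), (a x₀ : ℕ) = 0 ∧ (a x₁ : ℕ) = 1 := by
  classical
  have hcard : 1 < Fintype.card V := Fintype.one_lt_card_iff.mpr ⟨x₀, x₁, h⟩
  let z₀ : Fin (Fintype.card V) := ⟨0, by omega⟩
  let z₁ : Fin (Fintype.card V) := ⟨1, hcard⟩
  let a₀ := (Fintype.equivFin V).trans (Equiv.swap (Fintype.equivFin V x₀) z₀)
  have ha₀ : a₀ x₀ = z₀ := Equiv.swap_apply_left _ _
  refine ⟨a₀.trans (Equiv.swap (a₀ x₁) z₁), ?_, congrArg Fin.val (Equiv.swap_apply_left _ _)⟩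
  have hne : a₀ x₀ ≠ a₀ x₁ := a₀.injective.ne h
  rw [Equiv.trans_apply, Equiv.swap_apply_of_ne_of_ne hne (by simp [ha₀, z₀, z₁]), ha₀]

def lexEquivFin (a : V ≃ Fin (Fintype.card V)) (m : ℕ) :
    V × Fin m ≃ Fin (Fintype.card V * m) :=
  (a.prodCongr (Equiv.refl (Fin m))).trans finProdFinEquiv

theorem lexEquivFin_val (a : V ≃ Fin (Fintype.card V)) (u : V × Fin m) :
    (lexEquivFin a m u : ℕ) = u.2 + m * a u.1 := rfl

-- Consecutive positions lie in different layers; positions `≤ 3 < 2m` lie over `x₀` or `x₁`.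
theorem tailedPath_comap_lexEquivFin_le {G : SimpleGraph V} {x₀ x₁ : V} (hadj : G.Adj x₀ x₁)
    (hm : 2 ≤ m) {a : V ≃ Fin (Fintype.card V)} (ha₀ : (a x₀ : ℕ) = 0) (ha₁ : (a x₁ : ℕ) = 1) :
    (tailedPath _).comap (lexEquivFin a m) ≤ conormalProd G (⊤ : SimpleGraph (Fin m)) := by
  intro u v h
  have huv : u ≠ v := fun huv => (tailedPath _).ne_of_adj h (congrArg _ huv)
  have hfst (w : V × Fin m) (hw : (lexEquivFin a m w : ℕ) ≤ 3) : w.1 = x₀ ∨ w.1 = x₁ := by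
    rw [lexEquivFin_val] at hw
    have : (a w.1 : ℕ) < 2 := Nat.lt_of_mul_lt_mul_left (a := m) (by omega)
    rcases (by omega : (a w.1 : ℕ) = 0 ∨ (a w.1 : ℕ) = 1) with h | h
    · exact .inl (a.injective (Fin.ext (h.trans ha₀.symm)))
    · exact .inr (a.injective (Fin.ext (h.trans ha₁.symm)))
  rw [comap_adj, tailedPath_adj, lexEquivFin_val, lexEquivFin_val] at h
  by_cases hsnd : u.2 = v.2
  · have := congrArg Fin.val hsnd
    have := Nat.mul_add_one_ne_mul (x := a u.1) (y := a v.1) hm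
    have := Nat.mul_add_one_ne_mul (x := a v.1) (y := a u.1) hm
    refine conormalProd_top_adj_of_fst_mem hadj (hfst u ?_) (hfst v ?_) huv <;>
      rw [lexEquivFin_val] <;> omega
  · exact .inr hsnd

theorem distinguishingIndex_conormalProd_top_eq_two {G : SimpleGraph V} {x₀ x₁ : V}
    (hadj : G.Adj x₀ x₁) (hm : 2 ≤ m) (hN : 6 ≤ Fintype.card V * m) :
    distinguishingIndex (conormalProd G (⊤ : SimpleGraph (Fin m))) = 2 := by
  obtain ⟨a, ha₀, ha₁⟩ := exists_equiv_fin_val_eq_zero_val_eq_one hadj.ne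
  have : Nontrivial (Fin m) := Fin.nontrivial_iff_two_le.mpr hm
  have : Nonempty V := ⟨x₀⟩
  obtain ⟨ψ, hψ⟩ := exists_iso_top_ne_refl (W := Fin m)
  refine distinguishingIndex_eq_succ (k := 1) ?_
    (not_isDistinguishingEdgeLabeling_of_ne_refl (Iso.conormalProdCongr_refl_ne_refl hψ))
  exact ((graphRigid_tailedPath hN).of_iso (Iso.comap _ _)
    ).exists_isDistinguishingEdgeLabeling_fin_two (tailedPath_comap_lexEquivFin_le hadj hm ha₀ ha₁)

end Enumeration

end

theorem stmt17 {α : Type*} [Fintype α] (G : SimpleGraph α) (hG : G.Connected)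
    (hn : 2 ≤ Fintype.card α) (m : ℕ) (hm : 2 ≤ m) :
    (¬ (Fintype.card α = 2 ∧ m = 2) →
      distinguishingIndex (conormalProd G (⊤ : SimpleGraph (Fin m))) = 2) ∧
    ((Fintype.card α = 2 ∧ m = 2) →
      distinguishingIndex (conormalProd G (⊤ : SimpleGraph (Fin m))) = 3) := by
  have : Nontrivial α := Fintype.one_lt_card_iff_nontrivial.mp hn
  obtain ⟨x₀⟩ : Nonempty α := inferInstance
  obtain ⟨x₁, hadj⟩ := hG.preconnected.exists_adj_of_nontrivial x₀
  refine ⟨fun hne => distinguishingIndex_conormalProd_top_eq_two hadj hm ?_, ?_⟩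
  · rcases Nat.lt_or_ge m 3 with h | h
    · have : 3 ≤ Fintype.card α := by omega
      nlinarith
    · nlinarith
  · rintro ⟨hα, rfl⟩
    rw [hG.eq_top_of_card_eq_two hα, conormalProd_top_top,
      distinguishingIndex_congr (Iso.completeGraph
        (Fintype.equivFinOfCardEq (α := α × Fin 2) (n := 4) (by simp [hα])))]
    exact distinguishingIndex_top_fin_four
end
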